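/- arXiv:math/9702223 — 7 statements merged into one kernel-verified Lean document; each statement's English description precedes it below -/
import Mathlib

section
/- For all n ≥ 4, (2n - 4)! / (n! · (n-2)!) < 8^(n-2) / n^(5/2). -/
lemma central_le_four_pow (m : ℕ) : (2*m).choose m ≤ 4 ^ m := by
  calc (2*m).choose m ≤ ∑ i ∈ Finset.range (2*m+1), (2*m).choose i :=
        Finset.single_le_sum (fun i _ => Nat.zero_le _) (Finset.mem_range.mpr (by omega))
    _ = 2 ^ (2*m) := Nat.sum_range_choose (2*m)
    _ = 4 ^ m := by rw [pow_mul]; norm_num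

lemma key_cube (m : ℕ) (hm : 2 ≤ m) : (m+2)^3 < 4^m * (m+1)^2 := by
  induction m with
  | zero => omega
  | succ k ih =>
    rcases Nat.lt_or_ge k 2 with h | h
    · interval_cases k
      · omega
      · norm_num
    · have hk := ih h
      have h1 : (k+3)^3 ≤ 2*(k+2)^3 := by nlinarith
      have h3 : 2*(4^k*(k+1)^2) ≤ 4^(k+1)*(k+2)^2 := by
        calc 2*(4^k*(k+1)^2) = 4^k * (2*(k+1)^2) := by ring
          _ ≤ 4^k * (4*(k+2)^2) := Nat.mul_le_mul_left _ (by nlinarith)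
          _ = 4^(k+1)*(k+2)^2 := by rw [pow_succ]; ring
      show (k+3)^3 < 4^(k+1)*(k+2)^2
      calc (k+3)^3 ≤ 2*(k+2)^3 := h1
        _ < 2*(4^k*(k+1)^2) := by linarith
        _ ≤ 4^(k+1)*(k+2)^2 := h3

theorem factorial_quotient_lt (n : ℕ) (hn : 4 ≤ n) :
    ((Nat.factorial (2 * n - 4) : ℝ)) / (Nat.factorial n * Nat.factorial (n - 2)) <
      8 ^ (n - 2) / (n : ℝ) ^ ((5 : ℝ) / 2) := by
  obtain ⟨m, hm2, rfl⟩ : ∃ m, 2 ≤ m ∧ n = m + 2 := ⟨n-2, by omega, by omega⟩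
  have e1 : 2 * (m+2) - 4 = 2*m := by omega
  have e2 : (m+2) - 2 = m := by omega
  rw [e1, e2]
  set x : ℝ := ((m:ℝ) + 2) with hxdef
  have hxcast : ((m+2 : ℕ) : ℝ) = x := by push_cast; ring
  have hx0 : (0:ℝ) < x := by positivity
  have hF : (0:ℝ) < (Nat.factorial m : ℝ) := by exact_mod_cast Nat.factorial_pos m
  -- factorial identities
  have hfact : ((Nat.factorial (2*m)) : ℝ)
      = ((2*m).choose m : ℝ) * (Nat.factorial m * Nat.factorial m) := by
    have := Nat.choose_mul_factorial_mul_factorial (show m ≤ 2*m by omega)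
    rw [show 2*m - m = m by omega] at this
    exact_mod_cast (by rw [← this]; ring_nf : (Nat.factorial (2*m))
      = (2*m).choose m * (Nat.factorial m * Nat.factorial m))
  have hf2 : ((Nat.factorial (m+2)) : ℝ) = x * ((m:ℝ)+1) * Nat.factorial m := by
    rw [show m + 2 = (m+1)+1 by ring, Nat.factorial_succ, Nat.factorial_succ]
    push_cast; ring
  -- rpow identity
  have hrpow : x ^ ((5:ℝ)/2) = x^2 * Real.sqrt x := by
    rw [show (5:ℝ)/2 = (2:ℝ) + 1/2 by norm_num, Real.rpow_add hx0,
      Real.rpow_two, Real.sqrt_eq_rpow]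
  -- key sqrt inequality
  have hsq : x * Real.sqrt x < 2^m * ((m:ℝ)+1) := by
    have hcube : ((m+2)^3 : ℝ) < 4^m * ((m+1)^2 : ℝ) := by
      exact_mod_cast key_cube m hm2
    have hL : (0:ℝ) ≤ x * Real.sqrt x := by positivity
    have hR : (0:ℝ) ≤ 2^m * ((m:ℝ)+1) := by positivity
    refine lt_of_pow_lt_pow_left₀ 2 hR ?_
    have : (x * Real.sqrt x)^2 = x^3 := by
      rw [mul_pow, Real.sq_sqrt hx0.le]; ring
    rw [this]
    calc x^3 = ((m+2:ℕ)^3 : ℝ) := by push_cast; ring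
      _ < (4^m * (m+1)^2 : ℝ) := by push_cast at hcube ⊢; linarith
      _ = (2^m * ((m:ℝ)+1))^2 := by
          have h4 : ((2:ℝ)^m)^2 = 4^m := by rw [← pow_mul, pow_mul']; norm_num
          rw [mul_pow, h4]
  have hC : ((2*m).choose m : ℝ) ≤ 4^m := by exact_mod_cast central_le_four_pow m
  have hC0 : (0:ℝ) ≤ ((2*m).choose m : ℝ) := by positivity
  rw [hxcast, div_lt_div_iff₀ (by positivity) (by positivity), hrpow, hfact, hf2]
  have hmain : ((2*m).choose m : ℝ) * (x^2 * Real.sqrt x) < 8^m * (x * ((m:ℝ)+1)) := by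
    calc ((2*m).choose m : ℝ) * (x^2 * Real.sqrt x)
        ≤ 4^m * (x^2 * Real.sqrt x) := by
          have : (0:ℝ) ≤ x^2 * Real.sqrt x := by positivity
          exact mul_le_mul_of_nonneg_right hC this
      _ = (4^m * x) * (x * Real.sqrt x) := by ring
      _ < (4^m * x) * (2^m * ((m:ℝ)+1)) := by
          apply mul_lt_mul_of_pos_left hsq (by positivity)
      _ = (4^m * 2^m) * (x * ((m:ℝ)+1)) := by ring
      _ = 8^m * (x * ((m:ℝ)+1)) := by rw [← mul_pow]; norm_num
  calc ((2*m).choose m : ℝ) * (Nat.factorial m * Nat.factorial m) * (x^2 * Real.sqrt x)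
      = (((2*m).choose m : ℝ) * (x^2 * Real.sqrt x)) * (Nat.factorial m * Nat.factorial m) := by
        ring
    _ < (8^m * (x * ((m:ℝ)+1))) * (Nat.factorial m * Nat.factorial m) := by
        apply mul_lt_mul_of_pos_right hmain (by positivity)
    _ = 8^m * (x * ((m:ℝ)+1) * Nat.factorial m * Nat.factorial m) := by ring
end

section
/- Define S_n = ((7n² - 3n - 2)/2) · (-1)^(n-1) + 3 · Σ_{i=2}^{n} 2^(i+1) · (2i-4)!/(i!(i-2)!) · C(n-i+2, 2) · (-1)^(n-i) for n ≥ 1. Then S_n < 8^n for all n ≥ 1. -/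
open Finset

/-- The exact formula for `S_n(1342)`, the number of 1342-avoiding
permutations of length `n`. -/
def S1342 (n : ℕ) : ℚ :=
  ((7 * (n : ℚ) ^ 2 - 3 * n - 2) / 2) * (-1) ^ (n - 1) +
    3 * ∑ i ∈ Finset.Icc 2 n,
      2 ^ (i + 1) * (Nat.factorial (2 * i - 4) : ℚ) /
        (Nat.factorial i * Nat.factorial (i - 2)) *
        (Nat.choose (n - i + 2) 2) * (-1) ^ (n - i)

open Nat

/-!
Bound every term of `S_n` by its absolute value. Writing `i = k + 2` and `j = n - i`, the
`i`-th summand has absolute value `2^(k+3) (2k)! / ((k+2)! k!) · C(j+2, 2)`; the central binomial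
bound `(2k)! ≤ 4^k (k!)²` together with `(k+2)! ≥ 2 k!` and `C(j+2, 2) ≤ 3 · 2^j` make it at most
`3 · 2^n · 4^k`. Summing the geometric series, `3 Σ ≤ 3/4 · 8^n`, while the polynomial term is at
most `7n²/2 < 8^n/4` once `n ≥ 2`.
-/

lemma mul_neg_one_pow_le_abs {R : Type*} [Ring R] [LinearOrder R] [IsOrderedRing R]
    (a : R) (e : ℕ) : a * (-1) ^ e ≤ |a| := by
  simpa [abs_mul, abs_neg_one_pow] using le_abs_self (a * (-1) ^ e)

lemma Nat.choose_two_add_two_le (j : ℕ) : (j + 2).choose 2 ≤ 3 * 2 ^ j := by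
  induction j with
  | zero => simp
  | succ j ih =>
    have hstep : (j + 3).choose 2 = (j + 2).choose 2 + (j + 2) := by
      simp [Nat.choose_succ_succ', Nat.choose_one_right]
      omega
    have hlin : j < 2 ^ j := Nat.lt_two_pow_self
    have hpos : 1 ≤ 2 ^ j := Nat.one_le_two_pow
    rw [hstep, pow_succ]
    omega

lemma Nat.two_mul_factorial_two_mul_le (k : ℕ) :
    2 * (2 * k)! ≤ 4 ^ k * ((k + 2)! * k !) := by
  have hcentral : (2 * k)! = k.centralBinom * k ! * k ! := by
    rw [centralBinom_eq_two_mul_choose, two_mul, add_choose_mul_factorial_mul_factorial]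
  have hfactorial : 2 * k ! ≤ (k + 2)! := by
    rw [Nat.factorial_succ, Nat.factorial_succ, ← mul_assoc]
    exact Nat.mul_le_mul_right _ (by nlinarith)
  calc 2 * (2 * k)! = k.centralBinom * (2 * k ! * k !) := by rw [hcentral]; ring
    _ ≤ 4 ^ k * ((k + 2)! * k !) :=
      Nat.mul_le_mul (Nat.centralBinom_le_four_pow k) (Nat.mul_le_mul_right _ hfactorial)

lemma two_pow_mul_factorial_div_le (k : ℕ) :
    (2 ^ (k + 3) * ((2 * k)! : ℚ)) / ((k + 2)! * k !) ≤ 4 * 8 ^ k := by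
  rw [div_le_iff₀ (by positivity)]
  have h : (2 * (2 * k)! : ℚ) ≤ 4 ^ k * ((k + 2)! * k !) := by
    exact_mod_cast Nat.two_mul_factorial_two_mul_le k
  calc 2 ^ (k + 3) * ((2 * k)! : ℚ) = 4 * 2 ^ k * (2 * (2 * k)!) := by ring
    _ ≤ 4 * 2 ^ k * (4 ^ k * ((k + 2)! * k !)) := by gcongr
    _ = 4 * 8 ^ k * ((k + 2)! * k !) := by
      rw [show (8 : ℚ) = 2 * 4 by norm_num, mul_pow]; ring

lemma S1342_summand_le {n i : ℕ} (hi : i ∈ Icc 2 n) :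
    2 ^ (i + 1) * (Nat.factorial (2 * i - 4) : ℚ) /
        (Nat.factorial i * Nat.factorial (i - 2)) *
        (Nat.choose (n - i + 2) 2) * (-1) ^ (n - i) ≤ 3 * 2 ^ n * 4 ^ (i - 2) := by
  obtain ⟨hi2, hin⟩ := mem_Icc.mp hi
  obtain ⟨k, rfl⟩ : ∃ k, i = k + 2 := ⟨i - 2, by omega⟩
  obtain ⟨j, rfl⟩ : ∃ j, n = k + 2 + j := ⟨n - (k + 2), by omega⟩
  rw [show 2 * (k + 2) - 4 = 2 * k by omega, Nat.add_sub_cancel,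
    show k + 2 + j - (k + 2) + 2 = j + 2 by omega]
  refine (mul_neg_one_pow_le_abs _ _).trans ?_
  rw [abs_of_nonneg (by positivity)]
  have hchoose : ((j + 2).choose 2 : ℚ) ≤ 3 * 2 ^ j := by
    exact_mod_cast Nat.choose_two_add_two_le j
  calc _ ≤ 4 * 8 ^ k * (3 * 2 ^ j) :=
        mul_le_mul (two_pow_mul_factorial_div_le k) hchoose (by positivity) (by positivity)
    _ = 3 * 2 ^ (k + 2 + j) * 4 ^ (k + 2 - 2) := by
      rw [Nat.add_sub_cancel, show (8 : ℚ) = 2 * 4 by norm_num, mul_pow]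
      ring

lemma sum_Icc_two_four_pow_sub_two_le (n : ℕ) :
    ∑ i ∈ Icc 2 n, (4 : ℚ) ^ (i - 2) ≤ 4 ^ n / 12 := by
  induction n with
  | zero => simp
  | succ m ih =>
    rcases Nat.lt_or_ge m 1 with hm | hm
    · interval_cases m
      norm_num
    · rw [sum_Icc_succ_top (by omega), pow_succ]
      have hshift : (4 : ℚ) ^ (m + 1 - 2) * 4 = 4 ^ m := by
        rw [← pow_succ]; congr 1; omega
      linarith

lemma fourteen_mul_sq_lt_eight_pow {n : ℕ} (hn : 2 ≤ n) : 14 * n ^ 2 < 8 ^ n := by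
  induction n, hn using Nat.le_induction with
  | base => norm_num
  | succ m hm ih =>
    calc 14 * (m + 1) ^ 2 ≤ 8 * (14 * m ^ 2) := by nlinarith
      _ < 8 * 8 ^ m := by omega
      _ = 8 ^ (m + 1) := (pow_succ' 8 m).symm

theorem S1342_lt_eight_pow_general (n : ℕ) : S1342 n < 8 ^ n := by
  rcases Nat.lt_or_ge n 2 with hsmall | hn
  · interval_cases n <;> norm_num [S1342]
  have hn' : (2 : ℚ) ≤ n := by exact_mod_cast hn
  have hexp : 14 * (n : ℚ) ^ 2 < 8 ^ n := by exact_mod_cast fourteen_mul_sq_lt_eight_pow hn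
  rw [S1342]
  calc _ ≤ 7 * (n : ℚ) ^ 2 / 2 + 3 * (8 ^ n / 4) := by
        gcongr ?_ + 3 * ?_
        · refine (mul_neg_one_pow_le_abs _ _).trans ?_
          rw [abs_of_nonneg (by nlinarith)]
          linarith
        · calc _ ≤ ∑ i ∈ Icc 2 n, 3 * 2 ^ n * (4 : ℚ) ^ (i - 2) :=
                sum_le_sum fun i hi => S1342_summand_le hi
            _ = 3 * 2 ^ n * ∑ i ∈ Icc 2 n, (4 : ℚ) ^ (i - 2) := (mul_sum ..).symm
            _ ≤ 3 * 2 ^ n * (4 ^ n / 12) := by gcongr; exact sum_Icc_two_four_pow_sub_two_le n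
            _ = 8 ^ n / 4 := by rw [show (8 : ℚ) = 2 * 4 by norm_num, mul_pow]; ring
    _ < 8 ^ n := by linarith

theorem S1342_lt_eight_pow (n : ℕ) (hn : 1 ≤ n) : S1342 n < 8 ^ n :=
  S1342_lt_eight_pow_general n
end

section
/- As formal power series over ℚ, (1 - 8x)^(3/2) = 1 - 12x + Σ_{n≥2} 3 · 2^(n+2) · (2n-4)!/(n!(n-2)!) · x^n. -/
open PowerSeries

/-- The generalized binomial coefficient `C(r, k)` for a rational `r`. -/
def qchoose (r : ℚ) (k : ℕ) : ℚ :=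
  (∏ i ∈ Finset.range k, (r - i)) / Nat.factorial k

/-- The formal power series `(1 - 8x)^{3/2} = Σ_k C(3/2, k) (-8)^k x^k`. -/
def oneSub8XPow32 : PowerSeries ℚ :=
  PowerSeries.mk fun k => qchoose (3 / 2) k * (-8) ^ k

/-! The coefficients `a k = C(3/2, k) (-8)^k` satisfy `a (k + 1) = a k * 4 (2k - 3) / (k + 1)`.
From `k = 2` on, where both equal `24`, the closed form satisfies the same recurrence, since
`(2m + 2)! / (2m)! = 2 (m + 1) (2m + 1)`. -/

lemma qchoose_succ (r : ℚ) (k : ℕ) :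
    qchoose r (k + 1) = qchoose r k * (r - k) / (k + 1) := by
  simp only [qchoose, Finset.prod_range_succ, Nat.factorial_succ]
  push_cast
  field_simp

lemma qchoose_succ_mul_pow (r c : ℚ) (k : ℕ) :
    qchoose r (k + 1) * c ^ (k + 1) = qchoose r k * c ^ k * (c * (r - k) / (k + 1)) := by
  rw [qchoose_succ, pow_succ]
  ring

lemma qchoose_three_halves_mul_neg_eight_pow_add_two (m : ℕ) :
    qchoose (3 / 2) (m + 2) * (-8) ^ (m + 2) =
      3 * 2 ^ (m + 4) * ((2 * m).factorial : ℚ) / ((m + 2).factorial * m.factorial) := by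
  induction m with
  | zero => norm_num [qchoose, Finset.prod_range_succ]
  | succ m ih =>
    rw [qchoose_succ_mul_pow, ih, show 2 * (m + 1) = 2 * m + 1 + 1 by ring]
    simp only [Nat.factorial_succ]
    push_cast
    field_simp
    ring

theorem oneSub8XPow32_coeff :
    oneSub8XPow32 = PowerSeries.mk fun n =>
      if n = 0 then 1
      else if n = 1 then -12
      else 3 * 2 ^ (n + 2) * (Nat.factorial (2 * n - 4) : ℚ) /
        (Nat.factorial n * Nat.factorial (n - 2)) := by
  ext n
  rw [oneSub8XPow32, coeff_mk, coeff_mk]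
  match n with
  | 0 => simp [qchoose]
  | 1 => norm_num [qchoose]
  | m + 2 =>
    rw [qchoose_three_halves_mul_neg_eight_pow_add_two, if_neg (by omega), if_neg (by omega),
      show 2 * (m + 2) - 4 = 2 * m by omega, Nat.add_sub_cancel]
end

section
/- A 132-avoiding permutation p of {1,...,n} (n ≥ 1) is indecomposable if and only if p(n) = n. (A permutation p is decomposable if there exists k with 1 ≤ k < n such that p(i) > p(j) for all i ≤ k < j; otherwise p is indecomposable. p avoids 132 if there are no indices i < j < k with p(i) < p(k) < p(j).) -/
/-!
If the largest value sits at position `m`, then 132-avoidance forces every value before `m` to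
exceed every value after it, so a permutation whose last entry is not `n` splits right after `m`.
Conversely, when the last entry is `n`, it exceeds the first entry, which rules out any splitting.
-/

section Avoids132

variable {ι α : Type*} [LinearOrder ι] [LinearOrder α]

def Avoids132 (f : ι → α) : Prop :=
  ∀ i j k, i < j → j < k → ¬(f i < f k ∧ f k < f j)

theorem Avoids132.apply_lt_apply_of_le_of_lt {f : ι → α} (h132 : Avoids132 f)
    (hf : Function.Injective f) {i m j : ι} (hmax : ∀ x, f x ≤ f m) (him : i ≤ m)
    (hmj : m < j) : f j < f i := by
  have hjm : f j < f m := (hmax j).lt_of_ne (hf.ne hmj.ne')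
  rcases him.eq_or_lt with rfl | him
  · exact hjm
  · have hji : f j ≤ f i := not_lt.1 fun hij => h132 i m j him hmj ⟨hij, hjm⟩
    exact hji.lt_of_ne (hf.ne (him.trans hmj).ne')

end Avoids132

theorem Fin.le_mk_sub_one {n : ℕ} (x : Fin n) (h : n - 1 < n) : x ≤ ⟨n - 1, h⟩ :=
  Fin.mk_le_mk.2 (Nat.le_sub_one_of_lt x.isLt)

/-- A 132-avoiding permutation of `{1,...,n}` (`n ≥ 1`) is indecomposable
if and only if its last entry is `n` (in 0-indexed form, `p (n-1) = n-1`). -/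
theorem avoid132_indecomposable_iff_last (n : ℕ) (hn : 1 ≤ n)
    (p : Equiv.Perm (Fin n))
    (h132 : ∀ i j k : Fin n, i < j → j < k → ¬(p i < p k ∧ p k < p j)) :
    (¬ ∃ k : ℕ, 1 ≤ k ∧ k < n ∧
        ∀ i j : Fin n, (i : ℕ) < k → k ≤ (j : ℕ) → p j < p i) ↔
      p ⟨n - 1, by omega⟩ = ⟨n - 1, by omega⟩ := by
  set last : Fin n := ⟨n - 1, by omega⟩
  constructor
  · intro hindec
    by_contra hne
    set m := p.symm last
    have hpm : p m = last := p.apply_symm_apply last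
    have hml : m ≠ last := fun h => hne (by rwa [h] at hpm)
    have hm : (m : ℕ) < n - 1 := (Nat.le_sub_one_of_lt m.isLt).lt_of_ne (Fin.val_ne_of_ne hml)
    have hmax : ∀ x, p x ≤ p m := fun x => hpm ▸ (p x).le_mk_sub_one _
    refine hindec ⟨m + 1, by omega, by omega, fun i j hi hj => ?_⟩
    exact Avoids132.apply_lt_apply_of_le_of_lt h132 p.injective hmax
      (Fin.le_def.2 (by omega)) (Fin.lt_def.2 (by omega))
  · rintro hlast ⟨k, hk, hkn, hdec⟩
    have hlt := hdec ⟨0, by omega⟩ last hk (Nat.le_sub_one_of_lt hkn)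
    exact (hlast ▸ hlt).not_ge ((p ⟨0, by omega⟩).le_mk_sub_one _)
end

section
/- Two permutations of {1,...,n} are in the same class if they have the same left-to-right minima in the same positions (an entry p(i) is a left-to-right minimum if p(i) < p(j) for all j < i). Every nonempty class contains exactly one 132-avoiding permutation. -/
open Finset

namespace Avoid132Aux

variable {n : ℕ}

/-- `i` is (the position of) a left-to-right minimum of `p`. -/
def Mn (p : Equiv.Perm (Fin n)) (i : Fin n) : Prop := ∀ j, j < i → p i < p j

lemma fin_strong_ind {C : Fin n → Prop}
    (h : ∀ i : Fin n, (∀ j, j < i → C j) → C i) : ∀ i, C i := by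
  have H : ∀ m : ℕ, ∀ i : Fin n, i.val = m → C i := by
    intro m
    induction m using Nat.strong_induction_on with
    | _ m IH =>
      intro i him
      exact h i (fun j hj => IH j.val (him ▸ hj) j rfl)
  exact fun i => H i.val i rfl

/-- the prefix minimum of `p` over positions `≤ i`. -/
noncomputable def pmin (p : Equiv.Perm (Fin n)) (i : Fin n) : Fin n :=
  ((Finset.Iic i).image p).min'
    (Finset.Nonempty.image ⟨i, Finset.mem_Iic.mpr le_rfl⟩ _)

lemma pmin_le (p : Equiv.Perm (Fin n)) {i j : Fin n} (h : j ≤ i) : pmin p i ≤ p j :=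
  Finset.min'_le _ _ (Finset.mem_image_of_mem _ (Finset.mem_Iic.mpr h))

lemma pmin_exists (p : Equiv.Perm (Fin n)) (i : Fin n) :
    ∃ j, j ≤ i ∧ p j = pmin p i := by
  have h := Finset.min'_mem ((Finset.Iic i).image p)
    (Finset.Nonempty.image ⟨i, Finset.mem_Iic.mpr le_rfl⟩ _)
  rw [Finset.mem_image] at h
  obtain ⟨j, hj, hj'⟩ := h
  exact ⟨j, Finset.mem_Iic.mp hj, hj'⟩

lemma pmin_anti (p : Equiv.Perm (Fin n)) {i j : Fin n} (h : j ≤ i) :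
    pmin p i ≤ pmin p j := by
  obtain ⟨k, hk, hk'⟩ := pmin_exists p j
  exact hk' ▸ pmin_le p (hk.trans h)

/-- the position attaining the prefix minimum is a left-to-right minimum. -/
lemma pmin_argmin (p : Equiv.Perm (Fin n)) (i : Fin n) :
    ∃ j, j ≤ i ∧ p j = pmin p i ∧ Mn p j := by
  obtain ⟨j, hj, hj'⟩ := pmin_exists p i
  refine ⟨j, hj, hj', fun k hk => ?_⟩
  have h1 : p j ≤ p k := hj' ▸ pmin_le p (le_trans hk.le hj)
  exact lt_of_le_of_ne h1 (fun h => hk.ne (p.injective h.symm))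

lemma pmin_argmin_lt (p : Equiv.Perm (Fin n)) {i : Fin n} (h : ¬Mn p i) :
    ∃ j, j < i ∧ p j = pmin p i ∧ Mn p j := by
  obtain ⟨j, hj, hj', hm⟩ := pmin_argmin p i
  exact ⟨j, lt_of_le_of_ne hj (by rintro rfl; exact h hm), hj', hm⟩

/-- the candidate set at a non-minimum position, given the earlier values. -/
noncomputable def grS' (p : Equiv.Perm (Fin n)) (i : Fin n)
    (f : ∀ j : Fin n, j < i → Fin n) : Finset (Fin n) :=
  @Finset.filter _ (fun v => pmin p i < v ∧ ∀ j : Fin n, (h : j < i) → f j h ≠ v)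
    (Classical.decPred _) Finset.univ

open scoped Classical in
/-- the greedy 132-avoiding permutation in the class of `p`. -/
noncomputable def gr (p : Equiv.Perm (Fin n)) : Fin n → Fin n
  | i =>
    if Mn p i then p i
    else
      if hS : (grS' p i (fun j _ => gr p j)).Nonempty then (grS' p i (fun j _ => gr p j)).min' hS
      else i
termination_by i => i.val
decreasing_by all_goals (rename_i hj; exact hj)

noncomputable def grS (p : Equiv.Perm (Fin n)) (i : Fin n) : Finset (Fin n) :=
  grS' p i (fun j _ => gr p j)

lemma mem_grS {p : Equiv.Perm (Fin n)} {i v : Fin n} :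
    v ∈ grS p i ↔ pmin p i < v ∧ ∀ j : Fin n, j < i → gr p j ≠ v := by
  have hmem := @Finset.mem_filter (Fin n)
    (fun v => pmin p i < v ∧ ∀ j : Fin n, (h : j < i) → gr p j ≠ v)
    (Classical.decPred _) Finset.univ v
  rw [grS, grS', hmem]
  simp

open scoped Classical in
lemma gr_eq (p : Equiv.Perm (Fin n)) (i : Fin n) :
    gr p i = if Mn p i then p i
      else if hS : (grS p i).Nonempty then (grS p i).min' hS else i := by
  rw [gr]
  rfl

lemma gr_spec (p : Equiv.Perm (Fin n)) : ∀ i : Fin n,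
    (Mn p i → gr p i = p i) ∧
    (¬Mn p i → gr p i ∈ grS p i ∧ ∀ v ∈ grS p i, gr p i ≤ v) := by
  classical
  apply fin_strong_ind
  intro i IH
  constructor
  · intro h
    rw [gr_eq, if_pos h]
  · intro h
    obtain ⟨j₀, hj₀lt, hpj₀, hmj₀⟩ := pmin_argmin_lt p h
    have hgr0 : gr p j₀ = pmin p i := ((IH j₀ hj₀lt).1 hmj₀).trans hpj₀
    have hS : (grS p i).Nonempty := by
      by_contra hemp
      rw [Finset.not_nonempty_iff_eq_empty] at hemp
      have hsub : Finset.Ici (pmin p i) ⊆ (Finset.Iio i).image (gr p) := by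
        intro v hv
        rcases eq_or_lt_of_le (Finset.mem_Ici.mp hv) with hv' | hv'
        · exact Finset.mem_image.mpr ⟨j₀, Finset.mem_Iio.mpr hj₀lt, hv' ▸ hgr0⟩
        · by_contra hvnot
          have hvS : v ∈ grS p i := mem_grS.mpr ⟨hv', fun j hj hgrj =>
            hvnot (Finset.mem_image.mpr ⟨j, Finset.mem_Iio.mpr hj, hgrj⟩)⟩
          rw [hemp] at hvS
          exact absurd hvS (Finset.notMem_empty v)
      have h1 : (Finset.Ici (pmin p i)).card ≤ (Finset.Iio i).card :=
        le_trans (Finset.card_le_card hsub) Finset.card_image_le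
      have hsub2 : (Finset.Iic i).image p ⊆ Finset.Ici (pmin p i) := by
        intro v hv
        obtain ⟨j, hj, rfl⟩ := Finset.mem_image.mp hv
        exact Finset.mem_Ici.mpr (pmin_le p (Finset.mem_Iic.mp hj))
      have h2 : (Finset.Iic i).card ≤ (Finset.Ici (pmin p i)).card := by
        calc (Finset.Iic i).card = ((Finset.Iic i).image p).card :=
              (Finset.card_image_of_injective _ p.injective).symm
          _ ≤ _ := Finset.card_le_card hsub2
      rw [Fin.card_Ici] at h1 h2
      rw [Fin.card_Iio] at h1
      rw [Fin.card_Iic] at h2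
      omega
    rw [gr_eq, if_neg h, dif_pos hS]
    exact ⟨Finset.min'_mem _ _, fun v hv => Finset.min'_le _ _ hv⟩

lemma gr_min (p : Equiv.Perm (Fin n)) {i : Fin n} (h : Mn p i) : gr p i = p i :=
  (gr_spec p i).1 h

lemma gr_nonmin_mem (p : Equiv.Perm (Fin n)) {i : Fin n} (h : ¬Mn p i) :
    gr p i ∈ grS p i := ((gr_spec p i).2 h).1

lemma gr_nonmin_le (p : Equiv.Perm (Fin n)) {i : Fin n} (h : ¬Mn p i) :
    ∀ v ∈ grS p i, gr p i ≤ v := ((gr_spec p i).2 h).2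

lemma pmin_lt_gr_of_nonmin (p : Equiv.Perm (Fin n)) {i : Fin n} (h : ¬Mn p i) :
    pmin p i < gr p i := (mem_grS.mp (gr_nonmin_mem p h)).1

lemma pmin_le_gr (p : Equiv.Perm (Fin n)) (i : Fin n) : pmin p i ≤ gr p i := by
  by_cases h : Mn p i
  · rw [gr_min p h]; exact pmin_le p le_rfl
  · exact (pmin_lt_gr_of_nonmin p h).le

lemma min_lt_gr (p : Equiv.Perm (Fin n)) {i j : Fin n} (hij : j < i) (hi : Mn p i) :
    p i < gr p j := by
  obtain ⟨k, hk, hk'⟩ := pmin_exists p j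
  have h1 : p i < pmin p j := hk' ▸ hi k (lt_of_le_of_lt hk hij)
  exact lt_of_lt_of_le h1 (pmin_le_gr p j)

lemma gr_ne (p : Equiv.Perm (Fin n)) {j i : Fin n} (h : j < i) : gr p j ≠ gr p i := by
  by_cases hi : Mn p i
  · rw [gr_min p hi]
    exact (min_lt_gr p h hi).ne'
  · exact (mem_grS.mp (gr_nonmin_mem p hi)).2 j h

lemma gr_injective (p : Equiv.Perm (Fin n)) : Function.Injective (gr p) := by
  intro a b hab
  rcases lt_trichotomy a b with h | h | h
  · exact absurd hab (gr_ne p h)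
  · exact h
  · exact absurd hab.symm (gr_ne p h)

lemma gr_min_iff (p : Equiv.Perm (Fin n)) (i : Fin n) :
    (∀ j, j < i → gr p i < gr p j) ↔ Mn p i := by
  constructor
  · intro h
    by_contra hmin
    obtain ⟨j₀, hj₀lt, hpj₀, hmj₀⟩ := pmin_argmin_lt p hmin
    have h1 : gr p j₀ = pmin p i := (gr_min p hmj₀).trans hpj₀
    have h2 : pmin p i < gr p i := pmin_lt_gr_of_nonmin p hmin
    exact absurd (h j₀ hj₀lt) (not_lt.mpr (h1 ▸ h2.le))
  · intro h j hj
    rw [gr_min p h]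
    exact min_lt_gr p hj h

lemma gr_avoid (p : Equiv.Perm (Fin n)) {i j k : Fin n} (hij : i < j) (hjk : j < k) :
    ¬(gr p i < gr p k ∧ gr p k < gr p j) := by
  rintro ⟨h1, h2⟩
  have hj : ¬Mn p j := by
    intro hm
    have := min_lt_gr p hij hm
    rw [gr_min p hm] at h2
    exact absurd (h1.trans h2) (not_lt.mpr this.le)
  have hmem : gr p k ∈ grS p j := by
    refine mem_grS.mpr ⟨?_, fun j' hj' => gr_ne p (hj'.trans hjk)⟩
    calc pmin p j ≤ pmin p i := pmin_anti p hij.le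
      _ ≤ gr p i := pmin_le_gr p i
      _ < gr p k := h1
  exact absurd (gr_nonmin_le p hj _ hmem) (not_le.mpr h2)

lemma class_ge (p r : Equiv.Perm (Fin n))
    (hclass : ∀ i : Fin n, ((∀ j, j < i → r i < r j) ↔ Mn p i) ∧ (Mn p i → r i = p i)) :
    ∀ j, pmin p j ≤ r j := by
  intro j
  obtain ⟨j', hj'le, heq, hmn⟩ := pmin_argmin r j
  have hmp : Mn p j' := (hclass j').1.mp hmn
  calc pmin p j ≤ p j' := pmin_le p hj'le
    _ = r j' := ((hclass j').2 hmp).symm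
    _ = pmin r j := heq
    _ ≤ r j := pmin_le r le_rfl

lemma unique_aux (p r : Equiv.Perm (Fin n))
    (hclass : ∀ i : Fin n, ((∀ j, j < i → r i < r j) ↔ Mn p i) ∧ (Mn p i → r i = p i))
    (havoid : ∀ i j k : Fin n, i < j → j < k → ¬(r i < r k ∧ r k < r j)) :
    ∀ i, r i = gr p i := by
  apply fin_strong_ind
  intro i IH
  by_cases h : Mn p i
  · rw [(hclass i).2 h, gr_min p h]
  · obtain ⟨j₀, hj₀lt, hpj₀, hmj₀⟩ := pmin_argmin_lt p h
    have hrj₀ : r j₀ = pmin p i := ((hclass j₀).2 hmj₀).trans hpj₀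
    have hri : pmin p i < r i := by
      refine lt_of_le_of_ne (class_ge p r hclass i |>.trans_eq rfl) ?_
      intro he
      exact hj₀lt.ne (r.injective (hrj₀.trans he))
    have hmem : r i ∈ grS p i := by
      refine mem_grS.mpr ⟨hri, fun j hj hgrj => ?_⟩
      rw [← IH j hj] at hgrj
      exact hj.ne (r.injective hgrj)
    have hle : gr p i ≤ r i := gr_nonmin_le p h _ hmem
    rcases eq_or_lt_of_le hle with he | hlt
    · exact he.symm
    · exfalso
      set k := r.symm (gr p i) with hk
      have hrk : r k = gr p i := r.apply_symm_apply _
      have hki : i < k := by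
        rcases lt_trichotomy k i with h' | h' | h'
        · have := (IH k h').symm.trans hrk
          exact absurd (gr_injective p this) h'.ne
        · rw [h'] at hrk
          exact absurd hrk hlt.ne'
        · exact h'
      have hp1 : r j₀ < r k := by
        rw [hrj₀, hrk]
        exact pmin_lt_gr_of_nonmin p h
      have hp2 : r k < r i := hrk ▸ hlt
      exact havoid j₀ i k hj₀lt hki ⟨hp1, hp2⟩

end Avoid132Aux

/-- Every nonempty class of permutations of `{1,...,n}` — permutations
sharing the same left-to-right minima in the same positions — contains
exactly one 132-avoiding permutation. -/
theorem existsUnique_avoid132_in_class (n : ℕ) (p : Equiv.Perm (Fin n)) :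
    ∃! q : Equiv.Perm (Fin n),
      (∀ i : Fin n,
        ((∀ j : Fin n, j < i → q i < q j) ↔ (∀ j : Fin n, j < i → p i < p j)) ∧
        ((∀ j : Fin n, j < i → p i < p j) → q i = p i)) ∧
      (∀ i j k : Fin n, i < j → j < k → ¬(q i < q k ∧ q k < q j)) := by
  classical
  refine ⟨Equiv.ofBijective (Avoid132Aux.gr p)
    (Finite.injective_iff_bijective.mp (Avoid132Aux.gr_injective p)), ⟨?_, ?_⟩, ?_⟩
  · intro i
    exact ⟨Avoid132Aux.gr_min_iff p i, fun hm => Avoid132Aux.gr_min p hm⟩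
  · intro i j k hij hjk
    exact Avoid132Aux.gr_avoid p hij hjk
  · rintro q ⟨hclass, havoid⟩
    exact Equiv.ext (Avoid132Aux.unique_aux p q hclass havoid)
end

section
/- Let p and q be permutations of {1,...,n} with the same left-to-right minima in the same positions. Then p is indecomposable if and only if q is indecomposable, provided q is the unique 132-avoiding permutation in the class of p. More precisely: a class of permutations (determined by the set and positions of left-to-right minima) consists entirely of decomposable permutations or entirely of indecomposable permutations. -/
/-!
A permutation of `Fin n` decomposes after position `k` exactly when its first `k` values are the
`k` largest ones, i.e. all are at least `n - k`. The least of the first `k` values is taken at a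
left-to-right minimum, and the positions and values of those are the same throughout a class, so
this condition depends only on the class.
-/

open Finset Function

section LeftToRightMin

variable {ι α : Type*} [LinearOrder ι] [LinearOrder α]

def IsLeftToRightMin (f : ι → α) (i : ι) : Prop := ∀ j < i, f i < f j

/-- The position of the least value among the first `i` positions is a left-to-right minimum. -/
theorem exists_isLeftToRightMin_le [LocallyFiniteOrderBot ι] {f : ι → α} (hf : Injective f)
    (i : ι) : ∃ m ≤ i, IsLeftToRightMin f m ∧ f m ≤ f i := by
  obtain ⟨m, hm, hmin⟩ := (Iic i).exists_min_image f nonempty_Iic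
  refine ⟨m, mem_Iic.mp hm, fun j hj => ?_, hmin i (mem_Iic.mpr le_rfl)⟩
  exact (hmin j (mem_Iic.mpr (hj.le.trans (mem_Iic.mp hm)))).lt_of_ne (hf.ne hj.ne')

end LeftToRightMin

theorem Fin.card_filter_le_val (n k : ℕ) : #{i : Fin n | k ≤ (i : ℕ)} = n - k := by
  have h := card_filter_add_card_filter_not (s := univ) fun i : Fin n => (i : ℕ) < k
  simp only [not_lt, card_univ, Fintype.card_fin, Fin.card_filter_val_lt] at h
  omega

namespace Equiv.Perm

variable {n : ℕ}

def DecomposableAt (p : Perm (Fin n)) (k : ℕ) : Prop :=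
  ∀ i j : Fin n, (i : ℕ) < k → k ≤ (j : ℕ) → p j < p i

theorem decomposableAt_iff {p : Perm (Fin n)} {k : ℕ} :
    p.DecomposableAt k ↔ ∀ i : Fin n, (i : ℕ) < k → n - k ≤ (p i : ℕ) := by
  constructor
  · intro hp i hi
    calc n - k = #{j : Fin n | k ≤ (j : ℕ)} := (Fin.card_filter_le_val n k).symm
      _ ≤ #(Iio (p i)) := card_le_card_of_injOn p
          (fun j hj => by simpa using hp i j hi (by simpa using hj)) p.injective.injOn
      _ = p i := Fin.card_Iio _
  · intro hp i j hi hj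
    rw [Fin.lt_def]
    refine lt_of_lt_of_le ?_ (hp i hi)
    by_contra! hpj
    -- otherwise `j` and the first `k` positions carry `k + 1` of the `k` largest values
    have hkn : k < n := hj.trans_lt j.isLt
    have hcard := card_le_card_of_injOn p
      (s := insert j ({i : Fin n | (i : ℕ) < k} : Finset (Fin n)))
      (t := ({v : Fin n | n - k ≤ (v : ℕ)} : Finset (Fin n))) (fun x hx => ?_) p.injective.injOn
    · rw [card_insert_of_notMem (by simpa using hj), Fin.card_filter_val_lt,
        Fin.card_filter_le_val] at hcard
      omega
    · rcases mem_insert.mp hx with rfl | hx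
      · simpa using hpj
      · simpa using hp x (by simpa using hx)

theorem DecomposableAt.of_isLeftToRightMin_eq {p q : Perm (Fin n)} {k : ℕ}
    (hpq : ∀ m, IsLeftToRightMin q m → p m = q m) (hp : p.DecomposableAt k) :
    q.DecomposableAt k := by
  rw [decomposableAt_iff] at hp ⊢
  intro i hi
  obtain ⟨m, hmi, hm, hqm⟩ := exists_isLeftToRightMin_le q.injective i
  calc n - k ≤ p m := hp m (lt_of_le_of_lt hmi hi)
    _ = q m := by rw [hpq m hm]
    _ ≤ q i := hqm

end Equiv.Perm

/-- A class of permutations of `{1,...,n}` (determined by the set and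
positions of the left-to-right minima) consists entirely of decomposable
permutations or entirely of indecomposable permutations: if `p` and `q`
have the same left-to-right minima in the same positions, then `p` is
decomposable if and only if `q` is. -/
theorem decomposable_iff_of_same_class (n : ℕ) (p q : Equiv.Perm (Fin n))
    (hclass : ∀ i : Fin n,
      ((∀ j : Fin n, j < i → p i < p j) ↔ (∀ j : Fin n, j < i → q i < q j)) ∧
      ((∀ j : Fin n, j < i → p i < p j) → p i = q i)) :
    (∃ k : ℕ, 1 ≤ k ∧ k < n ∧
        ∀ i j : Fin n, (i : ℕ) < k → k ≤ (j : ℕ) → p j < p i) ↔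
      (∃ k : ℕ, 1 ≤ k ∧ k < n ∧
        ∀ i j : Fin n, (i : ℕ) < k → k ≤ (j : ℕ) → q j < q i) := by
  have hpq (k : ℕ) : p.DecomposableAt k ↔ q.DecomposableAt k :=
    ⟨.of_isLeftToRightMin_eq fun m hm => (hclass m).2 ((hclass m).1.2 hm),
      .of_isLeftToRightMin_eq fun m hm => ((hclass m).2 hm).symm⟩
  exact exists_congr fun k => and_congr_right fun _ => and_congr_right fun _ => hpq k
end

section
/- For n ≥ 8, the term 3 · 2^{n+1} · (2n-4)!/(n!(n-2)!) · C(2,2) (the i = n summand) exceeds the absolute value of the sum of all other terms in the expression ((7n²-3n-2)/2)·(-1)^{n-1} + 3·Σ_{i=2}^{n-1} 2^{i+1}·(2i-4)!/(i!(i-2)!)·C(n-i+2,2)·(-1)^{n-i}; consequently the full alternating expression for S_n(1342) is positive and bounded above by twice its last summand. -/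
/-!
With `b i = 2^(i+1) (2i-4)! / (i! (i-2)!)`, the unsigned summands are `T i = b i · C(n-i+2, 2)`.
Since `b (i+1) / b i = 4(2i-3)/(i+1) ≥ 3` for `i ≥ 3` while `C(k+1, 2) ≤ 3 C(k, 2)` for `k ≥ 2`,
the `T i` increase on `3 ≤ i ≤ n-1`, so the alternating tail `∑_{i=3}^{n-1}` lies between `0`
and `T (n-1) = 3 b (n-1)`. The other summands are therefore at most
`(7n²-3n-2)/2 + 3 (T 2 + T (n-1)) = (19n²-15n-2)/2 + 9 b (n-1)` in absolute value, and this is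
less than `3 b n` because `9 b (n-1) < 2 b n` and `b n ≥ 10 n²` for `n ≥ 8`.
-/

open Finset

theorem sum_Icc_succ_top_neg_one_pow_mul {α : Type*} [Ring α] (T : ℕ → α) {a m : ℕ}
    (ham : a ≤ m + 1) :
    ∑ i ∈ Icc a (m + 1), (-1 : α) ^ (m + 1 - i) * T i =
      T (m + 1) - ∑ i ∈ Icc a m, (-1 : α) ^ (m - i) * T i := by
  rw [sum_Icc_succ_top ham, Nat.sub_self, pow_zero, one_mul, sub_eq_neg_add,
    ← sum_neg_distrib]
  congr 1
  refine sum_congr rfl fun i hi => ?_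
  rw [Nat.sub_add_comm (mem_Icc.mp hi).2, pow_succ]
  noncomm_ring

section Alternating

variable {α : Type*} [CommRing α] [LinearOrder α] [IsStrictOrderedRing α] {T : ℕ → α} {a m : ℕ}

theorem sum_Icc_neg_one_pow_mul_mem_Icc (ham : a ≤ m) (h0 : 0 ≤ T a)
    (hT : MonotoneOn T (Set.Icc a m)) :
    ∑ i ∈ Icc a m, (-1 : α) ^ (m - i) * T i ∈ Set.Icc 0 (T m) := by
  induction m, ham using Nat.le_induction with
  | base => simpa using h0
  | succ m ham ih =>
    obtain ⟨ih0, ih1⟩ := ih (hT.mono (Set.Icc_subset_Icc_right m.le_succ))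
    have hTm : T m ≤ T (m + 1) :=
      hT ⟨ham, m.le_succ⟩ ⟨ham.trans m.le_succ, le_rfl⟩ m.le_succ
    rw [sum_Icc_succ_top_neg_one_pow_mul T (ham.trans m.le_succ)]
    constructor <;> linarith

theorem abs_sum_Icc_neg_one_pow_mul_le {N : ℕ} (ham : a < m) (hmN : m ≤ N) (h0 : 0 ≤ T a)
    (h1 : 0 ≤ T (a + 1)) (hT : MonotoneOn T (Set.Icc (a + 1) m)) :
    |∑ i ∈ Icc a m, (-1 : α) ^ (N - i) * T i| ≤ T a + T m := by
  have hsign : ∀ i ∈ Icc a m, (-1 : α) ^ (N - i) * T i =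
      (-1) ^ (N - m) * ((-1) ^ (m - i) * T i) := fun i hi => by
    rw [← mul_assoc, ← pow_add, Nat.sub_add_sub_cancel hmN (mem_Icc.mp hi).2]
  rw [sum_congr rfl hsign, ← mul_sum, abs_mul, abs_pow, abs_neg, abs_one, one_pow, one_mul,
    ← insert_Icc_add_one_left_eq_Icc ham.le, sum_insert (by simp), abs_le]
  obtain ⟨hlo, hhi⟩ := sum_Icc_neg_one_pow_mul_mem_Icc (show a + 1 ≤ m from ham) h1 hT
  have hfirst : |(-1 : α) ^ (m - a) * T a| ≤ T a := by simp [abs_of_nonneg h0]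
  constructor <;> linarith [abs_le.mp hfirst]

end Alternating

def summandCoeff (i : ℕ) : ℚ :=
  2 ^ (i + 1) * (Nat.factorial (2 * i - 4) : ℚ) / (Nat.factorial i * Nat.factorial (i - 2))

def summand (n i : ℕ) : ℚ := summandCoeff i * Nat.choose (n - i + 2) 2

theorem summandCoeff_pos (i : ℕ) : 0 < summandCoeff i := by
  unfold summandCoeff
  positivity

theorem summandCoeff_two : summandCoeff 2 = 4 := by
  norm_num [summandCoeff]

theorem succ_mul_summandCoeff_succ {i : ℕ} (hi : 2 ≤ i) :
    ((i : ℚ) + 1) * summandCoeff (i + 1) = 4 * (2 * i - 3) * summandCoeff i := by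
  obtain ⟨k, rfl⟩ := Nat.exists_eq_add_of_le' hi
  have h1 : 2 * (k + 2 + 1) - 4 = 2 * k + 1 + 1 := by omega
  have h2 : 2 * (k + 2) - 4 = 2 * k := by omega
  have h3 : k + 2 + 1 - 2 = k + 1 := by omega
  simp only [summandCoeff, h1, h2, h3, Nat.add_sub_cancel, Nat.factorial_succ]
  push_cast
  field_simp
  ring

theorem three_mul_summandCoeff_le {i : ℕ} (hi : 3 ≤ i) :
    3 * summandCoeff i ≤ summandCoeff (i + 1) := by
  have hrec := succ_mul_summandCoeff_succ (by omega : 2 ≤ i)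
  have hi' : (3 : ℚ) ≤ i := by exact_mod_cast hi
  have hpos := summandCoeff_pos i
  nlinarith

theorem nine_mul_summandCoeff_lt {i : ℕ} (hi : 5 ≤ i) :
    9 * summandCoeff i < 2 * summandCoeff (i + 1) := by
  have hrec := succ_mul_summandCoeff_succ (by omega : 2 ≤ i)
  have hi' : (5 : ℚ) ≤ i := by exact_mod_cast hi
  have hpos := summandCoeff_pos i
  nlinarith

theorem ten_mul_sq_le_summandCoeff {n : ℕ} (hn : 8 ≤ n) : 10 * (n : ℚ) ^ 2 ≤ summandCoeff n := by
  induction n, hn using Nat.le_induction with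
  | base => norm_num [summandCoeff, Nat.factorial]
  | succ n hn ih =>
    have hn' : (8 : ℚ) ≤ n := by exact_mod_cast hn
    push_cast
    nlinarith [three_mul_summandCoeff_le (by omega : 3 ≤ n)]

theorem summand_le_summand_succ {n i : ℕ} (hi : 3 ≤ i) (hin : i < n) :
    summand n i ≤ summand n (i + 1) := by
  obtain ⟨k, hk⟩ : ∃ k, n - i + 2 = k + 1 := ⟨n - i + 1, rfl⟩
  have hk' : n - (i + 1) + 2 = k := by omega
  have hk2 : (2 : ℚ) ≤ k := by exact_mod_cast (show 2 ≤ k by omega)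
  have hchoose : (Nat.choose (k + 1) 2 : ℚ) ≤ 3 * Nat.choose k 2 := by
    rw [Nat.cast_choose_two, Nat.cast_choose_two]
    push_cast
    nlinarith
  unfold summand
  rw [hk, hk']
  calc summandCoeff i * (Nat.choose (k + 1) 2 : ℚ)
      ≤ summandCoeff i * (3 * Nat.choose k 2) :=
        mul_le_mul_of_nonneg_left hchoose (summandCoeff_pos i).le
    _ = 3 * summandCoeff i * Nat.choose k 2 := by ring
    _ ≤ summandCoeff (i + 1) * Nat.choose k 2 :=
        mul_le_mul_of_nonneg_right (three_mul_summandCoeff_le hi) (by positivity)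

theorem summand_nonneg (n i : ℕ) : 0 ≤ summand n i :=
  mul_nonneg (summandCoeff_pos i).le (Nat.cast_nonneg _)

theorem monotoneOn_summand (n : ℕ) : MonotoneOn (summand n) (Set.Icc 3 (n - 1)) :=
  monotoneOn_of_le_succ Set.ordConnected_Icc fun i _ hi hi' => by
    rw [Order.succ_eq_add_one] at hi' ⊢
    exact summand_le_summand_succ hi.1 (by have := hi'.2; omega)

def otherSummands (n : ℕ) : ℚ :=
  (7 * (n : ℚ) ^ 2 - 3 * n - 2) / 2 * (-1) ^ (n - 1) +
    3 * ∑ i ∈ Icc 2 (n - 1), (-1) ^ (n - i) * summand n i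

theorem abs_otherSummands_lt {n : ℕ} (hn : 8 ≤ n) : |otherSummands n| < 3 * summandCoeff n := by
  have hsum : |∑ i ∈ Icc 2 (n - 1), (-1 : ℚ) ^ (n - i) * summand n i| ≤
      summand n 2 + summand n (n - 1) :=
    abs_sum_Icc_neg_one_pow_mul_le (by omega) (Nat.sub_le n 1) (summand_nonneg n 2)
      (summand_nonneg n 3) (monotoneOn_summand n)
  have hfirst : summand n 2 = 2 * n * (n - 1) := by
    rw [summand, summandCoeff_two, Nat.sub_add_cancel (by omega : 2 ≤ n), Nat.cast_choose_two]
    ring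
  have hlast : summand n (n - 1) = 3 * summandCoeff (n - 1) := by
    rw [summand, show n - (n - 1) + 2 = 3 by omega]
    norm_num [mul_comm]
  have hgrowth := nine_mul_summandCoeff_lt (by omega : 5 ≤ n - 1)
  rw [Nat.sub_add_cancel (by omega : 1 ≤ n)] at hgrowth
  have hlower := ten_mul_sq_le_summandCoeff hn
  have hn' : (8 : ℚ) ≤ n := by exact_mod_cast hn
  calc |otherSummands n|
      ≤ (7 * (n : ℚ) ^ 2 - 3 * n - 2) / 2 + 3 * (summand n 2 + summand n (n - 1)) := by
        unfold otherSummands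
        refine (abs_add_le _ _).trans (add_le_add (le_of_eq ?_) ?_)
        · rw [abs_mul, abs_pow, abs_neg, abs_one, one_pow, mul_one, abs_of_nonneg (by nlinarith)]
        · rw [abs_mul, abs_of_pos three_pos]
          gcongr
    _ < 3 * summandCoeff n := by rw [hfirst, hlast]; nlinarith

/-- For `n ≥ 8`, the last summand (the `i = n` term)
`3 · 2^{n+1} · (2n-4)!/(n!(n-2)!) · C(2,2)` of the alternating formula for
`S_n(1342)` exceeds the absolute value of the sum of all other terms;
consequently the full expression is positive and at most twice its last
summand. -/
theorem last_summand_dominates (n : ℕ) (hn : 8 ≤ n) :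
    letI L : ℚ := 3 * 2 ^ (n + 1) * (Nat.factorial (2 * n - 4) : ℚ) /
      (Nat.factorial n * Nat.factorial (n - 2)) * (Nat.choose 2 2)
    letI R : ℚ := ((7 * (n : ℚ) ^ 2 - 3 * n - 2) / 2) * (-1) ^ (n - 1) +
      3 * ∑ i ∈ Finset.Icc 2 (n - 1),
        2 ^ (i + 1) * (Nat.factorial (2 * i - 4) : ℚ) /
          (Nat.factorial i * Nat.factorial (i - 2)) *
          (Nat.choose (n - i + 2) 2) * (-1) ^ (n - i)
    |R| < L ∧ 0 < R + L ∧ R + L ≤ 2 * L := by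
  have of_abs_lt (R L : ℚ) (h : |R| < L) : |R| < L ∧ 0 < R + L ∧ R + L ≤ 2 * L :=
    ⟨h, by linarith [abs_lt.mp h], by linarith [abs_lt.mp h]⟩
  apply of_abs_lt
  convert abs_otherSummands_lt hn using 1
  · rw [otherSummands]
    congr 3
    refine sum_congr rfl fun i _ => ?_
    rw [summand, summandCoeff]
    ring
  · simp only [summandCoeff, Nat.choose_self, Nat.cast_one]
    ring
end
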